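/- Fix an integer s ≥ 1, integers ν_1,…,ν_s ≥ 0, an integer p ≥ 0, and reals y > 0, c > 0. Then ∑_{j=0}^{p} [(−p)_j / ((ν_1+1)_j j!)] · (1/(2π)) ∫_{−∞}^{∞} Γ(u+ν_1+j) ∏_{l=2}^{s} Γ(u+ν_l) · y^{−u} dτ = [(−1)^p Γ(1+ν_1) / Γ(1+ν_1+p)] · (1/(2π)) ∫_{−∞}^{∞} [Γ(u) Γ(u+ν_1) ∏_{l=2}^{s} Γ(u+ν_l) / Γ(u−p)] · y^{−u} dτ, where u = c + iτ and all integrals converge absolutely. -/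

import Mathlib

/-!
Off the line `τ = 0` (where `u - p` may be a pole of `Γ`), the two sides agree already as
integrands. Indeed `Γ(u+ν₁+j) = Γ(u+ν₁)·(u+ν₁)_j` and `Γ(u)/Γ(u-p) = (u-p)_p`, so the claim
reduces to the terminating Chu–Vandermonde sum `₂F₁(-p, b; ν₁+1; 1) = (ν₁+1-b)_p / (ν₁+1)_p`,
which for integral `ν₁` is the Vandermonde convolution of falling factorials at `-b` and
`ν₁ + p`. For convergence, the functional equation and `‖Γ z‖ ≤ Γ(Re z)` give
`‖Γ(σ+iτ)‖ ≤ Γ(σ+2)/(σ²+τ²)`, while the remaining factors are bounded on the line; the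
right-hand integrand is then integrable because it is a.e. a combination of the left-hand ones.
-/

open MeasureTheory Real Set Finset Complex

/-- The Pochhammer symbol `(a)_k = a(a+1)⋯(a+k−1)`, with `(a)_0 = 1`. -/
noncomputable def poch (a : ℝ) (k : ℕ) : ℝ := ∏ i ∈ Finset.range k, (a + i)

open Polynomial Nat

theorem poch_eq_ascPochhammer_eval (a : ℝ) (k : ℕ) : poch a k = (ascPochhammer ℝ k).eval a := by
  induction k with
  | zero => simp [poch]
  | succ k ih => rw [poch, prod_range_succ, ← poch, ih, ascPochhammer_succ_eval]

theorem poch_neg_natCast (p j : ℕ) : poch (-p) j = (-1) ^ j * (j ! * p.choose j) := by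
  rw [poch_eq_ascPochhammer_eval, ascPochhammer_eval_neg_eq_descPochhammer,
    descPochhammer_eval_eq_descFactorial, descFactorial_eq_factorial_mul_choose, Nat.cast_mul]

theorem factorial_mul_poch_natCast_add_one (ν j : ℕ) : ν ! * poch (ν + 1) j = (ν + j)! := by
  rw [poch_eq_ascPochhammer_eval, ← Nat.cast_succ, ← cast_ascFactorial, ← Nat.cast_mul,
    factorial_mul_ascFactorial]

section Pochhammer

variable {R : Type*} [CommRing R]

theorem descPochhammer_smeval_eq_eval (k : ℕ) (r : R) :
    (descPochhammer ℤ k).smeval r = (descPochhammer R k).eval r := by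
  rw [← aeval_eq_smeval, aeval_def, eval₂_eq_eval_map, descPochhammer_map]

theorem descPochhammer_eval_add (p : ℕ) (x y : R) :
    (descPochhammer R p).eval (x + y) = ∑ j ∈ range (p + 1),
      p.choose j * ((descPochhammer R j).eval x * (descPochhammer R (p - j)).eval y) := by
  simp_rw [← descPochhammer_smeval_eq_eval]
  rw [Ring.descPochhammer_smeval_add p (Commute.all x y),
    Nat.sum_antidiagonal_eq_sum_range_succ_mk]

theorem descPochhammer_eval_neg (r : R) (k : ℕ) :
    (descPochhammer R k).eval (-r) = (-1) ^ k * (ascPochhammer R k).eval r := by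
  rw [← neg_neg r, ascPochhammer_eval_neg_eq_descPochhammer, neg_neg, ← mul_assoc, ← mul_pow]
  simp

end Pochhammer

noncomputable def chuCoeff (p ν j : ℕ) : ℂ :=
  ((poch (-(p : ℝ)) j / (poch ((ν : ℝ) + 1) j * (j ! : ℝ))) : ℂ)

theorem chuCoeff_eq (p ν j : ℕ) :
    chuCoeff p ν j = (-1) ^ j * p.choose j * ν ! / (ν + j)! := by
  have hfact : ∀ n : ℕ, ((n ! : ℕ) : ℂ) ≠ 0 := fun n => Nat.cast_ne_zero.mpr (factorial_ne_zero n)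
  have hpoch : (poch (ν + 1) j : ℂ) = (ν + j)! / ν ! := by
    rw [eq_div_iff (hfact ν)]
    exact_mod_cast (mul_comm _ _).trans (factorial_mul_poch_natCast_add_one ν j)
  rw [chuCoeff]
  push_cast
  rw [hpoch, poch_neg_natCast]
  push_cast
  field_simp [hfact]

theorem sum_chuCoeff_mul_ascPochhammer_eval (p ν : ℕ) (b : ℂ) :
    ∑ j ∈ range (p + 1), chuCoeff p ν j * (ascPochhammer ℂ j).eval b
      = (-1) ^ p * ν ! / (ν + p)! * (ascPochhammer ℂ p).eval (b - ν - p) := by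
  have hfact : ∀ n : ℕ, ((n ! : ℕ) : ℂ) ≠ 0 := fun n => Nat.cast_ne_zero.mpr (factorial_ne_zero n)
  have hterm : ∀ j ∈ range (p + 1), chuCoeff p ν j * (ascPochhammer ℂ j).eval b
      = ν ! / (ν + p)! * (p.choose j *
          ((descPochhammer ℂ j).eval (-b) * (descPochhammer ℂ (p - j)).eval ((ν : ℂ) + p))) := by
    intro j hj
    have hjp : j ≤ p := Nat.lt_succ_iff.mp (mem_range.mp hj)
    have hdesc : (descPochhammer ℂ (p - j)).eval ((ν : ℂ) + p) = (ν + p)! / (ν + j)! := by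
      rw [← Nat.cast_add, descPochhammer_eval_eq_descFactorial, eq_div_iff (hfact _)]
      have := factorial_mul_descFactorial (n := ν + p) (k := p - j) (by omega)
      rw [show ν + p - (p - j) = ν + j by omega] at this
      exact_mod_cast (mul_comm _ _).trans this
    rw [chuCoeff_eq, hdesc, descPochhammer_eval_neg]
    field_simp [hfact]
  rw [sum_congr rfl hterm, ← mul_sum, ← descPochhammer_eval_add,
    show -b + ((ν : ℂ) + p) = -(b - ν - p) by ring, descPochhammer_eval_neg]
  ring

theorem norm_Gamma_le_Gamma_re {z : ℂ} (hz : 0 < z.re) : ‖Gamma z‖ ≤ Real.Gamma z.re := by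
  rw [Complex.Gamma_eq_integral hz, Real.Gamma_eq_integral hz, GammaIntegral]
  refine (norm_integral_le_integral_norm _).trans_eq (setIntegral_congr_fun measurableSet_Ioi ?_)
  intro x hx
  simp [norm_cpow_eq_rpow_re_of_pos hx, Complex.norm_exp]

theorem continuous_Gamma_comp {α : Type*} [TopologicalSpace α] {f : α → ℂ} (hf : Continuous f)
    (h : ∀ x, 0 < (f x).re) : Continuous fun x => Gamma (f x) := by
  refine continuous_iff_continuousAt.mpr fun x => ?_
  refine ((differentiableAt_Gamma _ fun m hm => ?_).continuousAt).comp hf.continuousAt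
  have := h x
  rw [hm, neg_re, natCast_re] at this
  linarith [(m.cast_nonneg : (0 : ℝ) ≤ m)]

theorem norm_Gamma_vertical_le {σ : ℝ} (hσ : 0 < σ) (τ : ℝ) :
    ‖Gamma (σ + τ * I)‖ ≤ Real.Gamma (σ + 2) / (σ ^ 2 + τ ^ 2) := by
  set w : ℂ := σ + τ * I
  have hw : ‖w‖ ^ 2 = σ ^ 2 + τ ^ 2 := by rw [Complex.sq_norm, normSq_add_mul_I]
  have hw1 : ‖w‖ ≤ ‖w + 1‖ := by
    refine (pow_le_pow_iff_left₀ (norm_nonneg _) (norm_nonneg _) two_ne_zero).mp ?_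
    rw [hw, show w + 1 = ((σ + 1 : ℝ) : ℂ) + τ * I by push_cast; ring, Complex.sq_norm,
      normSq_add_mul_I]
    nlinarith
  have hshift : Gamma (w + 2) = (w + 1) * w * Gamma w := by
    rw [show w + 2 = w + 1 + 1 by ring,
      Gamma_add_one _ (ne_zero_of_re_pos (by simpa [w] using by linarith)),
      Gamma_add_one _ (ne_zero_of_re_pos (by simpa [w]))]
    ring
  rw [le_div_iff₀ (by positivity), ← hw]
  calc ‖Gamma w‖ * ‖w‖ ^ 2 ≤ ‖Gamma w‖ * (‖w + 1‖ * ‖w‖) := by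
        rw [sq]; gcongr
    _ = ‖Gamma (w + 2)‖ := by rw [hshift]; simp only [norm_mul]; ring
    _ ≤ Real.Gamma (σ + 2) := by
        simpa [w] using norm_Gamma_le_Gamma_re (z := w + 2) (by simpa [w] using by linarith)

theorem integrable_Gamma_vertical {σ : ℝ} (hσ : 0 < σ) :
    Integrable fun τ : ℝ => Gamma (σ + τ * I) := by
  have hmajorant : Integrable fun τ : ℝ => Real.Gamma (σ + 2) / (σ ^ 2 + τ ^ 2) := by
    have := (integrable_inv_one_add_sq.comp_div hσ.ne').const_mul (Real.Gamma (σ + 2) / σ ^ 2)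
    refine this.congr (ae_of_all _ fun τ => ?_)
    field_simp
  refine hmajorant.mono' ?_ (ae_of_all _ (norm_Gamma_vertical_le hσ))
  exact (continuous_Gamma_comp (by fun_prop) fun τ => by simpa).aestronglyMeasurable

noncomputable def chuConst (p ν : ℕ) : ℂ :=
  (((-1 : ℝ) ^ p * Real.Gamma (1 + (ν : ℝ)) / Real.Gamma (1 + (ν : ℝ) + p)) : ℂ)

theorem chuConst_ne_zero (p ν : ℕ) : chuConst p ν ≠ 0 := by
  have hΓ : ∀ x : ℝ, 0 < x → (Real.Gamma x : ℂ) ≠ 0 :=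
    fun x hx => ofReal_ne_zero.mpr (Real.Gamma_pos_of_pos hx).ne'
  exact div_ne_zero (mul_ne_zero (by simp) (hΓ _ (by positivity))) (hΓ _ (by positivity))

theorem sum_chuCoeff_mul_Gamma_add (p ν : ℕ) {u : ℂ} (hu : ∀ k : ℕ, u - p ≠ -k) :
    ∑ j ∈ range (p + 1), chuCoeff p ν j * Gamma (u + ν + j)
      = chuConst p ν * (Gamma u * Gamma (u + ν) / Gamma (u - p)) := by
  have hν : ∀ k : ℕ, u + ν ≠ -k := fun k h => hu (k + ν + p) (by push_cast; linear_combination h)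
  have hshift : ∀ j : ℕ, Gamma (u + ν + j) = (ascPochhammer ℂ j).eval (u + ν) * Gamma (u + ν) :=
    fun j => (div_eq_iff (Gamma_ne_zero hν)).mp (Gamma_add_nat_div_Gamma_eq _ hν)
  have hratio : Gamma u / Gamma (u - p) = (ascPochhammer ℂ p).eval (u - p) := by
    simpa using Gamma_add_nat_div_Gamma_eq (n := p) _ hu
  have hconst : chuConst p ν = (-1) ^ p * ν ! / (ν + p)! := by
    rw [chuConst, show (1 : ℝ) + ν + p = (ν + p : ℕ) + 1 by push_cast; ring, add_comm (1 : ℝ),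
      Real.Gamma_nat_eq_factorial, Real.Gamma_nat_eq_factorial]
    push_cast
    ring
  simp_rw [hshift, ← mul_assoc, ← sum_mul, sum_chuCoeff_mul_ascPochhammer_eval, hconst,
    mul_div_right_comm (Gamma u), hratio, show u + ν - ν - p = u - p by ring]
  ring

theorem integrable_and_sum_mul_integral_eq {𝕜 α ι : Type*} [RCLike 𝕜] [MeasurableSpace α]
    {μ : Measure α} (s : Finset ι) (a : ι → 𝕜) {F : ι → α → 𝕜} {G : α → 𝕜} {K : 𝕜} (hK : K ≠ 0)
    (hF : ∀ i ∈ s, Integrable (F i) μ) (h : ∀ᵐ x ∂μ, ∑ i ∈ s, a i * F i x = K * G x) :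
    Integrable G μ ∧ ∑ i ∈ s, a i * ∫ x, F i x ∂μ = K * ∫ x, G x ∂μ := by
  have hsum : Integrable (fun x => ∑ i ∈ s, a i * F i x) μ :=
    integrable_finsetSum _ fun i hi => (hF i hi).const_mul (a i)
  constructor
  · refine (hsum.const_mul K⁻¹).congr (h.mono fun x hx => ?_)
    simp only [hx, inv_mul_cancel_left₀ hK]
  · simp_rw [← integral_const_mul]
    rw [← integral_finsetSum _ fun i hi => (hF i hi).const_mul (a i)]
    exact integral_congr_ae h

theorem chu_vandermonde_contour_of_bounded {c : ℝ} (hc : 0 < c) (ν p : ℕ) {P Y : ℝ → ℂ} {C : ℝ}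
    (hcont : Continuous fun τ => P τ * Y τ) (hbound : ∀ τ, ‖P τ * Y τ‖ ≤ C) :
    (∀ j : ℕ, j ≤ p → Integrable fun τ : ℝ => Gamma ((c + τ * I) + ν + j) * P τ * Y τ) ∧
    Integrable (fun τ : ℝ =>
      Gamma (c + τ * I) * Gamma ((c + τ * I) + ν) * P τ / Gamma ((c + τ * I) - p) * Y τ) ∧
    (∑ j ∈ range (p + 1), chuCoeff p ν j *
        ((1 / (2 * (π : ℂ))) * ∫ τ : ℝ, Gamma ((c + τ * I) + ν + j) * P τ * Y τ)
      = chuConst p ν * ((1 / (2 * (π : ℂ))) * ∫ τ : ℝ,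
          Gamma (c + τ * I) * Gamma ((c + τ * I) + ν) * P τ / Gamma ((c + τ * I) - p) * Y τ)) := by
  have hF : ∀ j : ℕ, Integrable fun τ : ℝ => Gamma ((c + τ * I) + ν + j) * P τ * Y τ := by
    intro j
    refine ((integrable_Gamma_vertical (σ := c + ν + j) (by positivity)).mul_bdd
      hcont.aestronglyMeasurable (ae_of_all _ hbound)).congr (ae_of_all _ fun τ => ?_)
    simp only [mul_assoc]
    congr 2
    push_cast
    ring
  have hpointwise : ∀ᵐ τ : ℝ, ∑ j ∈ range (p + 1),
        chuCoeff p ν j * (Gamma ((c + τ * I) + ν + j) * P τ * Y τ)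
      = chuConst p ν *
        (Gamma (c + τ * I) * Gamma ((c + τ * I) + ν) * P τ / Gamma ((c + τ * I) - p) * Y τ) := by
    filter_upwards [Measure.ae_ne volume 0] with τ hτ
    have hpole : ∀ k : ℕ, (c + τ * I) - p ≠ -k := fun k h => hτ (by simpa using congrArg im h)
    calc _ = (∑ j ∈ range (p + 1), chuCoeff p ν j * Gamma ((c + τ * I) + ν + j)) * (P τ * Y τ) := by
          rw [sum_mul]; exact sum_congr rfl fun j _ => by ring
      _ = _ := by rw [sum_chuCoeff_mul_Gamma_add p ν hpole]; ring
  obtain ⟨hG, hintegral⟩ :=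
    integrable_and_sum_mul_integral_eq _ _ (chuConst_ne_zero p ν) (fun j _ => hF j) hpointwise
  refine ⟨fun j _ => hF j, hG, ?_⟩
  simp only [mul_left_comm _ (1 / (2 * (π : ℂ)))]
  rw [← mul_sum, hintegral]

theorem chu_vandermonde_contour_general (s : ℕ) (ν : ℕ → ℕ) (p : ℕ) (y c : ℝ)
    (hy : 0 < y) (hc : 0 < c) :
    (∀ j : ℕ, j ≤ p → Integrable
      (fun τ : ℝ =>
        Complex.Gamma (((c : ℂ) + τ * Complex.I) + (ν 1 : ℂ) + (j : ℂ)) *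
          (∏ l : Fin (s - 1),
            Complex.Gamma (((c : ℂ) + τ * Complex.I) + (ν ((l : ℕ) + 2) : ℂ))) *
          (y : ℂ) ^ (-((c : ℂ) + τ * Complex.I)))) ∧
    Integrable
      (fun τ : ℝ =>
        Complex.Gamma ((c : ℂ) + τ * Complex.I) *
            Complex.Gamma (((c : ℂ) + τ * Complex.I) + (ν 1 : ℂ)) *
            (∏ l : Fin (s - 1),
              Complex.Gamma (((c : ℂ) + τ * Complex.I) + (ν ((l : ℕ) + 2) : ℂ))) /
            Complex.Gamma (((c : ℂ) + τ * Complex.I) - (p : ℂ)) *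
          (y : ℂ) ^ (-((c : ℂ) + τ * Complex.I))) ∧
    (∑ j ∈ Finset.range (p + 1),
        ((poch (-(p : ℝ)) j / (poch ((ν 1 : ℝ) + 1) j * (Nat.factorial j : ℝ))) : ℂ) *
          ((1 / (2 * (Real.pi : ℂ))) *
            ∫ τ : ℝ,
              Complex.Gamma (((c : ℂ) + τ * Complex.I) + (ν 1 : ℂ) + (j : ℂ)) *
                (∏ l : Fin (s - 1),
                  Complex.Gamma (((c : ℂ) + τ * Complex.I) + (ν ((l : ℕ) + 2) : ℂ))) *
                (y : ℂ) ^ (-((c : ℂ) + τ * Complex.I)))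
      = (((-1 : ℝ) ^ p * Real.Gamma (1 + (ν 1 : ℝ)) / Real.Gamma (1 + (ν 1 : ℝ) + p)) : ℂ) *
          ((1 / (2 * (Real.pi : ℂ))) *
            ∫ τ : ℝ,
              Complex.Gamma ((c : ℂ) + τ * Complex.I) *
                  Complex.Gamma (((c : ℂ) + τ * Complex.I) + (ν 1 : ℂ)) *
                  (∏ l : Fin (s - 1),
                    Complex.Gamma (((c : ℂ) + τ * Complex.I) + (ν ((l : ℕ) + 2) : ℂ))) /
                  Complex.Gamma (((c : ℂ) + τ * Complex.I) - (p : ℂ)) *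
                (y : ℂ) ^ (-((c : ℂ) + τ * Complex.I)))) := by
  refine chu_vandermonde_contour_of_bounded hc (ν 1) p
    (C := (∏ l : Fin (s - 1), Real.Gamma (c + ν (l + 2))) * y ^ (-c)) ?_ fun τ => ?_
  · refine (continuous_finsetProd _ fun l _ => continuous_Gamma_comp (by fun_prop)
      fun τ => by simpa using by positivity).mul ?_
    exact (by fun_prop : Continuous fun τ : ℝ => -((c : ℂ) + τ * I)).const_cpow
      (Or.inl (ofReal_ne_zero.mpr hy.ne'))
  · rw [norm_mul, norm_prod, norm_cpow_eq_rpow_re_of_pos hy,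
      show (-((c : ℂ) + τ * I)).re = -c by simp]
    gcongr with l
    exact norm_Gamma_le_Gamma_re (by simpa using by positivity) |>.trans_eq (by simp)

/-- Fix `s ≥ 1`, nonnegative integers `ν_1,…,ν_s`, an integer `p ≥ 0` and reals
`y, c > 0`.  Then, with `u = c+iτ`,
`∑_{j=0}^p [(−p)_j/((ν_1+1)_j j!)] (1/2π)∫ Γ(u+ν_1+j) ∏_{l=2}^s Γ(u+ν_l) y^{−u} dτ
 = [(−1)^p Γ(1+ν_1)/Γ(1+ν_1+p)] (1/2π)∫ [Γ(u)Γ(u+ν_1)∏_{l=2}^s Γ(u+ν_l)/Γ(u−p)] y^{−u} dτ`,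
and all the contour integrals converge absolutely. -/
theorem chu_vandermonde_contour (s : ℕ) (hs : 1 ≤ s) (ν : ℕ → ℕ) (p : ℕ) (y c : ℝ)
    (hy : 0 < y) (hc : 0 < c) :
    (∀ j : ℕ, j ≤ p → Integrable
      (fun τ : ℝ =>
        Complex.Gamma (((c : ℂ) + τ * Complex.I) + (ν 1 : ℂ) + (j : ℂ)) *
          (∏ l : Fin (s - 1),
            Complex.Gamma (((c : ℂ) + τ * Complex.I) + (ν ((l : ℕ) + 2) : ℂ))) *
          (y : ℂ) ^ (-((c : ℂ) + τ * Complex.I)))) ∧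
    Integrable
      (fun τ : ℝ =>
        Complex.Gamma ((c : ℂ) + τ * Complex.I) *
            Complex.Gamma (((c : ℂ) + τ * Complex.I) + (ν 1 : ℂ)) *
            (∏ l : Fin (s - 1),
              Complex.Gamma (((c : ℂ) + τ * Complex.I) + (ν ((l : ℕ) + 2) : ℂ))) /
            Complex.Gamma (((c : ℂ) + τ * Complex.I) - (p : ℂ)) *
          (y : ℂ) ^ (-((c : ℂ) + τ * Complex.I))) ∧
    (∑ j ∈ Finset.range (p + 1),
        ((poch (-(p : ℝ)) j / (poch ((ν 1 : ℝ) + 1) j * (Nat.factorial j : ℝ))) : ℂ) *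
          ((1 / (2 * (Real.pi : ℂ))) *
            ∫ τ : ℝ,
              Complex.Gamma (((c : ℂ) + τ * Complex.I) + (ν 1 : ℂ) + (j : ℂ)) *
                (∏ l : Fin (s - 1),
                  Complex.Gamma (((c : ℂ) + τ * Complex.I) + (ν ((l : ℕ) + 2) : ℂ))) *
                (y : ℂ) ^ (-((c : ℂ) + τ * Complex.I)))
      = (((-1 : ℝ) ^ p * Real.Gamma (1 + (ν 1 : ℝ)) / Real.Gamma (1 + (ν 1 : ℝ) + p)) : ℂ) *
          ((1 / (2 * (Real.pi : ℂ))) *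
            ∫ τ : ℝ,
              Complex.Gamma ((c : ℂ) + τ * Complex.I) *
                  Complex.Gamma (((c : ℂ) + τ * Complex.I) + (ν 1 : ℂ)) *
                  (∏ l : Fin (s - 1),
                    Complex.Gamma (((c : ℂ) + τ * Complex.I) + (ν ((l : ℕ) + 2) : ℂ))) /
                  Complex.Gamma (((c : ℂ) + τ * Complex.I) - (p : ℂ)) *
                (y : ℂ) ^ (-((c : ℂ) + τ * Complex.I)))) :=
  chu_vandermonde_contour_general s ν p y c hy hc
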